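/- Fix d ≥ 1 and let P, Q, R, ζ' be d×d real matrices such that I − Q ζ' is invertible, ‖(I − Q ζ')^{-1} R‖ < 1 (L∞ operator norm), and ζ := (I − Q ζ' − R)^{-1} P satisfies ζ·𝟙 = 𝟙. Then ∑_{K=1}^∞ K · ((I − Q ζ')^{-1} R)^K (I − Q ζ')^{-1} P 𝟙 = (I − Q ζ' − R)^{-1} R 𝟙. -/

import Mathlib

open Matrix

attribute [local instance] Matrix.linftyOpNormedRing
-- Through this instance, `HasSummableGeomSeries` is found for square real matrices.
attribute [local instance] Matrix.linftyOpNormedAlgebra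

/-!
Write `B = 1 - Q ζ'` and `M = B⁻¹ R`. Then `1 - Q ζ' - R = B (1 - M)`, so the hypothesis on `ζ`
says `B⁻¹ P 𝟙 = (1 - M) 𝟙`, and the series becomes `∑ K M^K (1 - M) 𝟙`. Since `‖M‖ < 1`,
`∑ K M^K = M (1 - M)⁻²`, hence the sum is `M (1 - M)⁻¹ 𝟙 = (1 - M)⁻¹ B⁻¹ R 𝟙`.
-/

theorem hasSum_nsmul_geometric_mul_one_sub {R : Type*} [NormedRing R] [HasSummableGeomSeries R]
    {x : R} (hx : ‖x‖ < 1) :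
    HasSum (fun n : ℕ => n • (x ^ n * (1 - x))) (Ring.inverse (1 - x) * x) := by
  have hunit : IsUnit (1 - x) := isUnit_one_sub_of_norm_lt_one hx
  have hcomm : Commute x (Ring.inverse (1 - x)) := by
    have h : Commute (1 - x) (Ring.inverse (1 - x)) :=
      (Ring.mul_inverse_cancel _ hunit).trans (Ring.inverse_mul_cancel _ hunit).symm
    simpa only [sub_sub_cancel] using (Commute.one_left _).sub_left h
  have hsum := (hasSum_coe_mul_geometric_of_norm_lt_one' hx).mul_right (1 - x)
  rw [sq, mul_assoc, mul_assoc, Ring.inverse_mul_cancel _ hunit, mul_one, hcomm.eq] at hsum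
  simpa only [nsmul_eq_mul, mul_assoc] using hsum

theorem HasSum.matrix_mulVec {ι m n R : Type*} [Fintype n] [NonUnitalNonAssocSemiring R]
    [TopologicalSpace R] [IsTopologicalSemiring R] {f : ι → Matrix m n R} {a : Matrix m n R}
    (hf : HasSum f a) (v : n → R) :
    HasSum (fun i => f i *ᵥ v) (a *ᵥ v) :=
  hf.map (mulVec.addMonoidHomLeft v) (continuous_id.matrix_mulVec continuous_const)

theorem Matrix.inv_sub_eq_inv_one_sub_mul {n α : Type*} [Fintype n] [DecidableEq n] [CommRing α]
    {B R : Matrix n n α} (hB : IsUnit B) :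
    (B - R)⁻¹ = (1 - B⁻¹ * R)⁻¹ * B⁻¹ := by
  have hfactor : B - R = B * (1 - B⁻¹ * R) := by
    rw [mul_sub, mul_one, mul_nonsing_inv_cancel_left _ _ ((isUnit_iff_isUnit_det B).mp hB)]
  rw [hfactor, mul_inv_rev]

theorem conditional_mean_Z_general (d : ℕ) (P Q R ζ' : Matrix (Fin d) (Fin d) ℝ)
    (hinv : IsUnit (1 - Q * ζ')) (hR : ‖(1 - Q * ζ')⁻¹ * R‖ < 1)
    (hζ : ((1 - Q * ζ' - R)⁻¹ * P) *ᵥ (1 : Fin d → ℝ) = 1) :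
    HasSum
      (fun K : ℕ =>
        K • ((((1 - Q * ζ')⁻¹ * R) ^ K * (1 - Q * ζ')⁻¹ * P) *ᵥ (1 : Fin d → ℝ)))
      (((1 - Q * ζ' - R)⁻¹ * R) *ᵥ (1 : Fin d → ℝ)) := by
  rw [inv_sub_eq_inv_one_sub_mul hinv] at hζ ⊢
  set M := (1 - Q * ζ')⁻¹ * R
  have hunit : IsUnit (1 - M) := isUnit_one_sub_of_norm_lt_one hR
  have hP : ((1 - Q * ζ')⁻¹ * P) *ᵥ 1 = (1 - M) *ᵥ 1 := by
    conv_rhs => rw [← hζ, mulVec_mulVec, ← mul_assoc, ← mul_assoc,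
      mul_nonsing_inv _ ((isUnit_iff_isUnit_det _).mp hunit), one_mul]
  have hterm (K : ℕ) : (M ^ K * (1 - Q * ζ')⁻¹ * P) *ᵥ 1 = (M ^ K * (1 - M)) *ᵥ 1 := by
    rw [mul_assoc, ← mulVec_mulVec, hP, mulVec_mulVec]
  have hsum := (hasSum_nsmul_geometric_mul_one_sub hR).matrix_mulVec 1
  simp only [smul_mulVec, ← hterm, ← nonsing_inv_eq_ringInverse] at hsum
  rwa [mul_assoc]

/-- Formula (2.18): the conditional expectation of the lateral step count `|Z_n|` equals
`(I - Q ζ' - R)⁻¹ R 𝟙`, i.e.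
`∑_{K=1}^∞ K ((I - Q ζ')⁻¹ R)^K (I - Q ζ')⁻¹ P 𝟙 = (I - Q ζ' - R)⁻¹ R 𝟙`. -/
theorem conditional_mean_Z (d : ℕ) (hd : 1 ≤ d) (P Q R ζ' : Matrix (Fin d) (Fin d) ℝ)
    (hinv : IsUnit (1 - Q * ζ')) (hR : ‖(1 - Q * ζ')⁻¹ * R‖ < 1)
    (hζ : ((1 - Q * ζ' - R)⁻¹ * P) *ᵥ (1 : Fin d → ℝ) = 1) :
    HasSum
      (fun K : ℕ =>
        K • ((((1 - Q * ζ')⁻¹ * R) ^ K * (1 - Q * ζ')⁻¹ * P) *ᵥ (1 : Fin d → ℝ)))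
      (((1 - Q * ζ' - R)⁻¹ * R) *ᵥ (1 : Fin d → ℝ)) :=
  conditional_mean_Z_general d P Q R ζ' hinv hR hζ
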